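/- Let k be a field and n ≥ 1 an integer, and let g_n(t) = 2n·d(t) where d(t) is the distance from t to {k/n : k ∈ ℤ}. Then the persistence module M_{g_n} : P ⥤ ModuleCat k is indecomposable (whenever M_{g_n} ≅ A ⊞ B, one of A, B is pointwise zero), and for every c with 0 ≤ c < 1 the k-module M_{g_n}(0,1,c) has dimension n+1. Hence there exist indecomposable persistence modules arising from one-parameter families of functions whose pointwise dimension is arbitrarily large. -/

import Mathlib

open CategoryTheory

noncomputable section

/-- The map induced on connected components by an inclusion of subspaces. -/
def compMap {Y : Type} [TopologicalSpace Y] {A B : Set Y} (h : A ⊆ B) :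
    ConnectedComponents A → ConnectedComponents B :=
  (continuous_inclusion h).connectedComponentsMap

lemma compMap_id {Y : Type} [TopologicalSpace Y] {A : Set Y} (h : A ⊆ A) :
    compMap h = id := by
  funext x
  obtain ⟨y, rfl⟩ := ConnectedComponents.surjective_coe x
  rfl

lemma compMap_comp {Y : Type} [TopologicalSpace Y] {A B C : Set Y}
    (hAB : A ⊆ B) (hBC : B ⊆ C) (hAC : A ⊆ C) :
    compMap hAC = compMap hBC ∘ compMap hAB := by
  funext x
  obtain ⟨y, rfl⟩ := ConnectedComponents.surjective_coe x
  rfl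

/-- The persistence module (valued in free `k`-modules on connected components)
associated to a monotone family of subspaces indexed by a poset: it assigns to `p`
the free `k`-module on the set of connected components of `A p`, and to each
relation `p ≤ q` the `k`-linear map sending the basis element of a connected
component of `A p` to the basis element of the connected component of `A q`
containing it. -/
def compFunctor (k : Type) [Field k] {α : Type} [Preorder α] {Y : Type} [TopologicalSpace Y]
    (A : α → Set Y) (mono : Monotone A) : α ⥤ ModuleCat k where
  obj p := ModuleCat.of k (ConnectedComponents (A p) →₀ k)
  map {p q} h := ModuleCat.ofHom (Finsupp.lmapDomain k k (compMap (mono (leOfHom h))))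
  map_id p := by
    apply ModuleCat.hom_ext
    show Finsupp.lmapDomain k k _ = _
    rw [compMap_id]; exact Finsupp.lmapDomain_id _ _
  map_comp {p q r} f g := by
    apply ModuleCat.hom_ext
    show Finsupp.lmapDomain k k _ = _
    rw [compMap_comp (mono (leOfHom f)) (mono (leOfHom g))]
    exact Finsupp.lmapDomain_comp _ _ _ _

/-- The sublevel set `S(a,b,c) = {t ∈ ℝ : a ≤ t ≤ b and g t ≤ c}`. -/
def Slev (g : ℝ → ℝ) (a b c : ℝ) : Set ℝ := {t : ℝ | a ≤ t ∧ t ≤ b ∧ g t ≤ c}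

/-- The indexing poset `P = {(a,b,c) ∈ ℝ³ : 0 ≤ a ≤ b ≤ 1}` with
`(a,b,c) ⊑ (a',b',c')` iff `a' ≤ a`, `b ≤ b'` and `c ≤ c'`. -/
def PP : Type := {p : ℝ × ℝ × ℝ // 0 ≤ p.1 ∧ p.1 ≤ p.2.1 ∧ p.2.1 ≤ 1}

namespace PP

instance : PartialOrder PP where
  le p q := q.1.1 ≤ p.1.1 ∧ p.1.2.1 ≤ q.1.2.1 ∧ p.1.2.2 ≤ q.1.2.2
  le_refl p := ⟨le_refl _, le_refl _, le_refl _⟩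
  le_trans p q r h h' := ⟨h'.1.trans h.1, h.2.1.trans h'.2.1, h.2.2.trans h'.2.2⟩
  le_antisymm p q h h' :=
    Subtype.ext (Prod.ext (le_antisymm h'.1 h.1)
      (Prod.ext (le_antisymm h.2.1 h'.2.1) (le_antisymm h.2.2 h'.2.2)))

/-- The coordinate `a` of a point of `P`. -/
def a (p : PP) : ℝ := p.1.1
/-- The coordinate `b` of a point of `P`. -/
def b (p : PP) : ℝ := p.1.2.1
/-- The coordinate `c` of a point of `P`. -/
def c (p : PP) : ℝ := p.1.2.2

lemma le_def {p q : PP} : p ≤ q ↔ q.a ≤ p.a ∧ p.b ≤ q.b ∧ p.c ≤ q.c := Iff.rfl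

end PP

lemma Slev_mono (g : ℝ → ℝ) : Monotone (fun p : PP => Slev g p.a p.b p.c) :=
  fun _ _ h _ ht => ⟨h.1.trans ht.1, ht.2.1.trans h.2.1, ht.2.2.trans h.2.2⟩

/-- The persistence module `M_g : P ⥤ ModuleCat k` of a function `g : ℝ → ℝ`:
it assigns to `(a,b,c) ∈ P` the free `k`-module on the set of connected components of
the sublevel set `S(a,b,c)`, and to each relation `(a,b,c) ⊑ (a',b',c')` the `k`-linear
map sending the basis element corresponding to a component `C` of `S(a,b,c)` to the basis
element corresponding to the unique component of `S(a',b',c')` containing `C`. -/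
def Mg (k : Type) [Field k] (g : ℝ → ℝ) : PP ⥤ ModuleCat k :=
  compFunctor k (fun p : PP => Slev g p.a p.b p.c) (Slev_mono g)

/-- `g_n(t) = 2n·d(t)` where `d(t)` is the distance from `t` to the set
`{k/n : k ∈ ℤ}`.  On `[0,1]` this is the piecewise linear function with
`g_n(i/n) = 0` for `0 ≤ i ≤ n` and `g_n((2i−1)/(2n)) = 1` for `1 ≤ i ≤ n`. -/
noncomputable def gfun (n : ℕ) (t : ℝ) : ℝ := 2 * n * Metric.infDist t {x : ℝ | ∃ k : ℤ, x = k / n}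

/-!
Every endomorphism of `M_g` is a scalar: over a point `(t, t, g t)` the sublevel set is `{t}`, so
the module there is at most one-dimensional, and naturality along `(t, t, g t) ⊑ (0, 1, 1)`, where
`S(0, 1, 1) = [0, 1]` is connected, forces all these scalars to agree. Hence the only idempotent
endomorphisms are `0` and `1`, and `M_{g_n}` does not split.

Since `g_n t = 2 |n t - round (n t)|`, for `c < 1` every point `t` of `S(0, 1, c)` lies within
`c / (2n) < 1 / (2n)` of the grid point `round (n t) / n`. The index `round (n t)` is locally
constant on `S(0, 1, c)`, takes every value in `{0, …, n}` and has intervals as fibres, so it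
enumerates the `n + 1` components.
-/

open Metric Set Filter Topology

theorem Finsupp.exists_eq_smul_id_of_subsingleton {k ι : Type*} [CommSemiring k] [Subsingleton ι]
    (f : (ι →₀ k) →ₗ[k] ι →₀ k) : ∃ μ : k, f = μ • LinearMap.id := by
  cases isEmpty_or_nonempty ι with
  | inl _ => exact ⟨0, Subsingleton.elim _ _⟩
  | inr h =>
    obtain ⟨x₀⟩ := h
    refine ⟨f (single x₀ 1) x₀, lhom_ext fun x b => ?_⟩
    obtain rfl := Subsingleton.elim x x₀
    ext y
    obtain rfl := Subsingleton.elim y x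
    rw [← smul_single_one y b]
    simp only [map_smul, LinearMap.smul_apply, LinearMap.id_apply, smul_apply, smul_eq_mul,
      single_eq_same, one_mul, mul_comm]

section compFunctor

variable {k : Type} [Field k] {α : Type} [Preorder α] {Y : Type} [TopologicalSpace Y]
  {A : α → Set Y} {mono : Monotone A}

lemma compFunctor_map_single {p q : α} (h : p ≤ q) (x : A p) (v : k) :
    ((compFunctor k A mono).map (homOfLE h)).hom (Finsupp.single (ConnectedComponents.mk x) v)
      = Finsupp.single (ConnectedComponents.mk (Set.inclusion (mono h) x)) v := by
  show Finsupp.lmapDomain k k _ _ = _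
  simp [compMap]

lemma compFunctor_naturality_single (e : compFunctor k A mono ⟶ compFunctor k A mono)
    {p q : α} (h : p ≤ q) (x : A p) (v : k) :
    (e.app q).hom (Finsupp.single (ConnectedComponents.mk (Set.inclusion (mono h) x)) v)
      = ((compFunctor k A mono).map (homOfLE h)).hom
          ((e.app p).hom (Finsupp.single (ConnectedComponents.mk x) v)) := by
  rw [← compFunctor_map_single h]
  exact congr($(e.naturality (homOfLE h)).hom (Finsupp.single (ConnectedComponents.mk x) v))

lemma compFunctor_app_single_of_isPreconnected (e : compFunctor k A mono ⟶ compFunctor k A mono)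
    {q : α} (hq : IsPreconnected (A q)) :
    ∃ μ : k, ∀ z v, (e.app q).hom (Finsupp.single z v) = Finsupp.single z (μ * v) := by
  have := isPreconnected_iff_preconnectedSpace.mp hq
  obtain ⟨μ, hμ⟩ := Finsupp.exists_eq_smul_id_of_subsingleton (e.app q).hom
  exact ⟨μ, fun z v => by rw [hμ]; exact Finsupp.smul_single μ z v⟩

theorem compFunctor_endomorphism_eq_smul_id {T : α} (hT : IsPreconnected (A T))
    (hA : ∀ p, ∀ x ∈ A p, ∃ q ≤ p, q ≤ T ∧ x ∈ A q ∧ IsPreconnected (A q))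
    (e : compFunctor k A mono ⟶ compFunctor k A mono) :
    ∃ μ : k, e = μ • 𝟙 _ := by
  obtain ⟨μ, hμ⟩ := compFunctor_app_single_of_isPreconnected e hT
  refine ⟨μ, NatTrans.ext (funext fun p => ModuleCat.hom_ext (Finsupp.lhom_ext fun z v => ?_))⟩
  obtain ⟨⟨x, hx⟩, rfl⟩ := ConnectedComponents.surjective_coe z
  obtain ⟨q, hqp, hqT, hxq, hq⟩ := hA p x hx
  obtain ⟨ν, hν⟩ := compFunctor_app_single_of_isPreconnected e hq
  have hνμ : ν = μ := by
    have := compFunctor_naturality_single e hqT ⟨x, hxq⟩ 1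
    rw [hμ, hν, compFunctor_map_single] at this
    simpa using (Finsupp.single_injective _ this).symm
  have := compFunctor_naturality_single e hqp ⟨x, hxq⟩ v
  rw [hν, hνμ, compFunctor_map_single] at this
  simp only [NatTrans.app_smul, NatTrans.id_app, ModuleCat.hom_smul, ModuleCat.hom_id]
  exact this.trans (Finsupp.smul_single μ _ v).symm

end compFunctor

section Preadditive

variable {C : Type*} [Category C] [Preadditive C]

theorem eq_zero_or_eq_id_of_idempotent {R : Type*} [Field R] [Linear R C] {M : C}
    (hM : ∀ e : M ⟶ M, ∃ μ : R, e = μ • 𝟙 M) (e : M ⟶ M) (he : e ≫ e = e) :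
    e = 0 ∨ e = 𝟙 M := by
  obtain ⟨μ, rfl⟩ := hM e
  have : (μ * μ - μ) • 𝟙 M = 0 := by
    rw [sub_smul, mul_smul, sub_eq_zero]
    simpa using he
  rcases smul_eq_zero.mp this with h | h
  · have : μ * (μ - 1) = 0 := by rw [mul_sub, mul_one]; exact h
    rcases mul_eq_zero.mp this with rfl | h
    · simp
    · rw [sub_eq_zero.mp h]; simp
  · simp [h]

theorem isZero_or_isZero_of_iso_biprod [Limits.HasBinaryBiproducts C] {M A B : C}
    (hM : ∀ e : M ⟶ M, e ≫ e = e → e = 0 ∨ e = 𝟙 M) (i : M ≅ A ⊞ B) :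
    Limits.IsZero A ∨ Limits.IsZero B := by
  set e := i.hom ≫ Limits.biprod.fst ≫ Limits.biprod.inl ≫ i.inv
  rcases hM e (by simp [e]) with h | h
  · left
    rw [Limits.IsZero.iff_id_eq_zero]
    simpa [e] using congr(Limits.biprod.inl ≫ i.inv ≫ $h ≫ i.hom ≫ Limits.biprod.fst)
  · right
    rw [Limits.IsZero.iff_id_eq_zero]
    simpa [e] using congr(Limits.biprod.inr ≫ i.inv ≫ $h ≫ i.hom ≫ Limits.biprod.snd).symm

end Preadditive

theorem Continuous.connectedComponentsLift_bijective {X ι : Type*} [TopologicalSpace X]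
    [TopologicalSpace ι] [TotallyDisconnectedSpace ι] {f : X → ι} (hf : Continuous f)
    (hsurj : Function.Surjective f) (hfib : ∀ i, IsPreconnected (f ⁻¹' {i})) :
    Function.Bijective hf.connectedComponentsLift := by
  refine ⟨fun z z' h => ?_, fun i => (hsurj i).imp' ConnectedComponents.mk fun _ hx => hx⟩
  obtain ⟨x, rfl⟩ := ConnectedComponents.surjective_coe z
  obtain ⟨y, rfl⟩ := ConnectedComponents.surjective_coe z'
  rw [ConnectedComponents.coe_eq_coe']
  exact (hfib (f y)).subset_connectedComponent rfl h

lemma round_mono : Monotone (round : ℝ → ℤ) := fun x y h => by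
  simp only [round_eq]
  exact Int.floor_mono (by linarith)

lemma round_eq_of_abs_sub_lt {x : ℝ} {i : ℤ} (h : |x - i| < 1 / 2) : round x = i :=
  round_eq_iff.mpr ⟨by linarith [neg_abs_le (x - i)], by linarith [le_abs_self (x - i)]⟩

lemma round_eventuallyEq {x : ℝ} (h : |x - round x| < 1 / 2) : ∀ᶠ y in 𝓝 x, round y = round x :=
  ((continuous_id.sub continuous_const).abs.tendsto x).eventually (gt_mem_nhds h) |>.mono
    fun _ => round_eq_of_abs_sub_lt

lemma infDist_intCast_div_natCast (n : ℕ) (hn : n ≠ 0) (t : ℝ) :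
    infDist t {x : ℝ | ∃ k : ℤ, x = k / n} = |n * t - round (n * t)| / n := by
  have hn₀ : (0 : ℝ) < n := by positivity
  have hdist : ∀ k : ℤ, dist t (k / n) = |n * t - k| / n := fun k => by
    rw [Real.dist_eq, ← abs_of_pos hn₀, ← abs_div, abs_of_pos hn₀, sub_div,
      mul_div_cancel_left₀ _ hn₀.ne']
  have hmem : ∀ k : ℤ, (k : ℝ) / n ∈ {x : ℝ | ∃ k : ℤ, x = k / n} := fun k => ⟨k, rfl⟩
  refine le_antisymm ((infDist_le_dist_of_mem (hmem _)).trans_eq (hdist _)) ?_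
  rw [le_infDist ⟨_, hmem 0⟩]
  rintro _ ⟨k, rfl⟩
  rw [hdist]
  exact div_le_div_of_nonneg_right (round_le _ k) hn₀.le

lemma gfun_eq (n : ℕ) (t : ℝ) : gfun n t = 2 * |n * t - round (n * t)| := by
  rcases eq_or_ne n 0 with rfl | hn
  · simp [gfun]
  · rw [gfun, infDist_intCast_div_natCast n hn]
    field_simp

lemma gfun_le_one (n : ℕ) (t : ℝ) : gfun n t ≤ 1 := by
  rw [gfun_eq]
  linarith [abs_sub_round ((n : ℝ) * t)]

lemma Slev_self (g : ℝ → ℝ) (t : ℝ) : Slev g t t (g t) = {t} :=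
  eq_singleton_iff_unique_mem.mpr
    ⟨⟨le_rfl, le_rfl, le_rfl⟩, fun _ hs => le_antisymm hs.2.1 hs.1⟩

lemma Slev_zero_one_of_le (g : ℝ → ℝ) {c : ℝ} (hg : ∀ t ∈ Icc (0 : ℝ) 1, g t ≤ c) :
    Slev g 0 1 c = Icc 0 1 :=
  Set.ext fun t => ⟨fun ht => ⟨ht.1, ht.2.1⟩, fun ht => ⟨ht.1, ht.2, hg t ht⟩⟩

theorem Mg_endomorphism_eq_smul_id (k : Type) [Field k] (g : ℝ → ℝ) {c : ℝ}
    (hg : ∀ t ∈ Icc (0 : ℝ) 1, g t ≤ c) (e : Mg k g ⟶ Mg k g) : ∃ μ : k, e = μ • 𝟙 _ := by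
  refine compFunctor_endomorphism_eq_smul_id (T := ⟨(0, 1, c), le_rfl, zero_le_one, le_rfl⟩)
    ?_ (fun p t ht => ?_) e
  · exact (Slev_zero_one_of_le g hg).symm ▸ isPreconnected_Icc
  · have ht₀ : 0 ≤ t := p.2.1.trans ht.1
    have ht₁ : t ≤ 1 := ht.2.1.trans p.2.2.2
    refine ⟨⟨(t, t, g t), ht₀, le_rfl, ht₁⟩, ht, ⟨ht₀, ht₁, hg t ⟨ht₀, ht₁⟩⟩, ?_⟩
    exact (Slev_self g t).symm ▸ ⟨rfl, isPreconnected_singleton⟩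

lemma round_natCast_mul_mem_Icc (n : ℕ) {t : ℝ} (ht : t ∈ Icc (0 : ℝ) 1) :
    round ((n : ℝ) * t) ∈ Icc (0 : ℤ) n := by
  have hn : (0 : ℝ) ≤ n := n.cast_nonneg
  constructor
  · simpa using round_mono (mul_nonneg hn ht.1)
  · simpa using round_mono (mul_le_of_le_one_right hn ht.2)

lemma mem_Slev_gfun_and_round_eq_iff (n : ℕ) {c : ℝ} (hc : c < 1) (t : ℝ) (i : ℤ) :
    t ∈ Slev (gfun n) 0 1 c ∧ round ((n : ℝ) * t) = i ↔
      t ∈ Icc (0 : ℝ) 1 ∩ (fun s => (n : ℝ) * s) ⁻¹' Icc (i - c / 2) (i + c / 2) := by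
  simp only [Slev, gfun_eq, mem_ofPred_eq, mem_inter_iff, mem_Icc, mem_preimage]
  constructor
  · rintro ⟨⟨h₀, h₁, hg⟩, rfl⟩
    have := abs_sub_le_iff.mp (le_div_iff₀' two_pos |>.mpr hg)
    exact ⟨⟨h₀, h₁⟩, by linarith, by linarith⟩
  · rintro ⟨⟨h₀, h₁⟩, hl, hr⟩
    have hi : |(n : ℝ) * t - i| ≤ c / 2 := abs_sub_le_iff.mpr ⟨by linarith, by linarith⟩
    have hround : round ((n : ℝ) * t) = i := round_eq_of_abs_sub_lt (by linarith)
    exact ⟨⟨h₀, h₁, by rw [hround]; linarith⟩, hround⟩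

def gridIndex (n : ℕ) (c : ℝ) (t : Slev (gfun n) 0 1 c) : Icc (0 : ℤ) n :=
  ⟨round ((n : ℝ) * t), round_natCast_mul_mem_Icc n ⟨t.2.1, t.2.2.1⟩⟩

section gridIndex

variable {n : ℕ} {c : ℝ}

lemma continuous_gridIndex (hc : c < 1) : Continuous (gridIndex n c) := by
  refine Continuous.subtype_mk (IsLocallyConstant.continuous ?_) _
  refine (IsLocallyConstant.iff_eventually_eq _).mpr fun t => ?_
  have hnear : |(n : ℝ) * t - round ((n : ℝ) * t)| < 1 / 2 := by
    have := t.2.2.2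
    rw [gfun_eq] at this
    linarith
  exact ((continuous_const.mul continuous_subtype_val).tendsto t).eventually
    (round_eventuallyEq hnear)

lemma surjective_gridIndex (hc : 0 ≤ c) (hc' : c < 1) : Function.Surjective (gridIndex n c) := by
  rintro ⟨i, hi₀, hin⟩
  have hgrid : (n : ℝ) * (i / n) = i := by
    rcases eq_or_ne n 0 with rfl | hn
    · simp [le_antisymm hin hi₀]
    · exact mul_div_cancel₀ _ (by positivity)
  have hmem := (mem_Slev_gfun_and_round_eq_iff n hc' (i / n) i).mpr
    ⟨⟨by positivity, div_le_one_of_le₀ (by exact_mod_cast hin) n.cast_nonneg⟩,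
      by simp only [mem_preimage, hgrid, mem_Icc]; constructor <;> linarith⟩
  exact ⟨⟨_, hmem.1⟩, Subtype.ext hmem.2⟩

lemma isPreconnected_gridIndex_preimage (hc : c < 1) (i : Icc (0 : ℤ) n) :
    _root_.IsPreconnected (gridIndex n c ⁻¹' {i}) := by
  rw [← Topology.IsInducing.subtypeVal.isPreconnected_image]
  have himage : Subtype.val '' (gridIndex n c ⁻¹' {i})
      = Icc (0 : ℝ) 1 ∩ (fun s => (n : ℝ) * s) ⁻¹' Icc ((i : ℤ) - c / 2) ((i : ℤ) + c / 2) := by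
    ext t
    rw [← mem_Slev_gfun_and_round_eq_iff n hc]
    simp [gridIndex, Subtype.ext_iff, and_comm]
  rw [himage]
  exact (ordConnected_Icc.inter
    (ordConnected_Icc.preimage_mono (monotone_id.const_mul n.cast_nonneg))).isPreconnected

def connectedComponentsSlevGfunEquiv (hc : 0 ≤ c) (hc' : c < 1) :
    _root_.ConnectedComponents (Slev (gfun n) 0 1 c) ≃ Icc (0 : ℤ) n :=
  Equiv.ofBijective _ ((continuous_gridIndex hc').connectedComponentsLift_bijective
    (surjective_gridIndex hc hc') (isPreconnected_gridIndex_preimage hc'))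

theorem finrank_Mg_gfun_obj (k : Type) [Field k] (hc : 0 ≤ c) (hc' : c < 1) :
    Module.finrank k ((Mg k (gfun n)).obj ⟨(0, 1, c), le_refl 0, zero_le_one, le_refl 1⟩)
      = n + 1 := by
  show Module.finrank k (_root_.ConnectedComponents (Slev (gfun n) 0 1 c) →₀ k) = n + 1
  rw [(Finsupp.domLCongr (connectedComponentsSlevGfunEquiv hc hc')).finrank_eq,
    Module.finrank_finsupp_self]
  simp

end gridIndex

theorem Mg_gfun_indecomposable_arbitrary_dimension_general (k : Type) [Field k]
    (n : ℕ) :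
    ((∀ (A B : PP ⥤ ModuleCat k), (Mg k (gfun n) ≅ A ⊞ B) →
      (∀ p : PP, Limits.IsZero (A.obj p)) ∨ (∀ p : PP, Limits.IsZero (B.obj p)))) ∧
    (∀ c : ℝ, 0 ≤ c → c < 1 →
      Module.finrank k
        ((Mg k (gfun n)).obj ⟨(0, 1, c), le_refl 0, zero_le_one, le_refl 1⟩) = n + 1) := by
  refine ⟨fun A B i => ?_, fun c hc₀ hc₁ => finrank_Mg_gfun_obj k hc₀ hc₁⟩
  have hidem := eq_zero_or_eq_id_of_idempotent
    (Mg_endomorphism_eq_smul_id k (gfun n) fun t _ => gfun_le_one n t)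
  exact (isZero_or_isZero_of_iso_biprod hidem i).imp (fun h => h.obj) fun h => h.obj

/-- **Indecomposable persistence modules with arbitrarily large pointwise dimension**
(Section `sec:arb-dim`).  For every `n ≥ 1`, the persistence module `M_{g_n}` is
indecomposable, and for every `0 ≤ c < 1` the value `M_{g_n}(0,1,c)` has dimension
`n + 1` over `k`. -/
theorem Mg_gfun_indecomposable_arbitrary_dimension (k : Type) [Field k]
    (n : ℕ) (hn : 1 ≤ n) :
    ((∀ (A B : PP ⥤ ModuleCat k), (Mg k (gfun n) ≅ A ⊞ B) →
      (∀ p : PP, Limits.IsZero (A.obj p)) ∨ (∀ p : PP, Limits.IsZero (B.obj p)))) ∧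
    (∀ c : ℝ, 0 ≤ c → c < 1 →
      Module.finrank k
        ((Mg k (gfun n)).obj ⟨(0, 1, c), le_refl 0, zero_le_one, le_refl 1⟩) = n + 1) :=
  Mg_gfun_indecomposable_arbitrary_dimension_general k n

end
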